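/- arXiv:2506.09131 — 4 statements merged into one kernel-verified Lean document; each statement's English description precedes it below -/
import Mathlib

section
/- For a single qudit with first-order gauge transformation ε^S_j ↦ ε^S_j + p/d (for each j ≠ 0) and ε^M_{l,k} ↦ ε^M_{l,k} − p/d (for each k ≠ l), the positivity constraint (all parameters nonnegative) holds if and only if −d·min_{j≠0} ε^S_j ≤ p ≤ d·min_{k≠l} ε^M_{l,k}; consequently each parameter is determined only up to an interval of length A = min_{j≠0} ε^S_j + min_{k≠l} ε^M_{l,k}. -/
theorem stmt7 (d : ℕ) [NeZero d] (hd : 2 ≤ d)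
    (εS : Fin d → ℝ) (εM : Fin d → Fin d → ℝ)
    (hS : ∀ j : Fin d, j ≠ 0 → 0 ≤ εS j)
    (hM : ∀ l k : Fin d, k ≠ l → 0 ≤ εM l k) :
    (∀ p : ℝ,
        ((∀ j : Fin d, j ≠ 0 → 0 ≤ εS j + p / d) ∧
          (∀ l k : Fin d, k ≠ l → 0 ≤ εM l k - p / d)) ↔
        (-(d * ⨅ j : {j : Fin d // j ≠ 0}, εS j) ≤ p ∧
          p ≤ d * ⨅ q : {q : Fin d × Fin d // q.2 ≠ q.1}, εM q.1.1 q.1.2)) ∧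
    (∀ j : Fin d, j ≠ 0 →
      (fun p : ℝ => εS j + p / d) ''
          Set.Icc (-(d * ⨅ j : {j : Fin d // j ≠ 0}, εS j))
            (d * ⨅ q : {q : Fin d × Fin d // q.2 ≠ q.1}, εM q.1.1 q.1.2) =
        Set.Icc (εS j - ⨅ j : {j : Fin d // j ≠ 0}, εS j)
          (εS j + ⨅ q : {q : Fin d × Fin d // q.2 ≠ q.1}, εM q.1.1 q.1.2)) := by
  have dpos : (0:ℝ) < (d:ℝ) := by
    exact_mod_cast Nat.lt_of_lt_of_le Nat.zero_lt_two hd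
  have dne : (d:ℝ) ≠ 0 := dpos.ne'
  have hone : ((⟨1, by omega⟩ : Fin d) : Fin d) ≠ 0 := by
    intro h
    simpa using congrArg Fin.val h
  haveI : Nonempty {j : Fin d // j ≠ 0} := ⟨⟨⟨1, by omega⟩, hone⟩⟩
  haveI : Nonempty {q : Fin d × Fin d // q.2 ≠ q.1} :=
    ⟨⟨((0 : Fin d), ⟨1, by omega⟩), hone⟩⟩
  set A : ℝ := ⨅ j : {j : Fin d // j ≠ 0}, εS j with hA
  set B : ℝ := ⨅ q : {q : Fin d × Fin d // q.2 ≠ q.1}, εM q.1.1 q.1.2 with hB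
  have hAle : ∀ j : Fin d, j ≠ 0 → A ≤ εS j := fun j hj =>
    ciInf_le (Set.Finite.bddBelow (Set.finite_range _)) (⟨j, hj⟩ : {j : Fin d // j ≠ 0})
  have hBle : ∀ l k : Fin d, k ≠ l → B ≤ εM l k := fun l k hk =>
    ciInf_le (Set.Finite.bddBelow (Set.finite_range _)) (⟨(l, k), hk⟩ : {q : Fin d × Fin d // q.2 ≠ q.1})
  have hA0 : 0 ≤ A := le_ciInf fun j => hS j.1 j.2
  have hB0 : 0 ≤ B := le_ciInf fun q => hM q.1.1 q.1.2 q.2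
  constructor
  · intro p
    constructor
    · rintro ⟨h1, h2⟩
      have hA' : -p / d ≤ A := le_ciInf fun j => by
        have := h1 j.1 j.2
        rw [neg_div]
        linarith
      have hB' : p / d ≤ B := le_ciInf fun q => by
        have := h2 q.1.1 q.1.2 q.2
        linarith
      constructor
      · nlinarith [(div_le_iff₀ dpos).mp hA']
      · nlinarith [(div_le_iff₀ dpos).mp hB']
    · rintro ⟨h1, h2⟩
      constructor
      · intro j hj
        have h3 : -A ≤ p / d := (le_div_iff₀ dpos).mpr (by nlinarith)
        linarith [hAle j hj]
      · intro l k hk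
        have h3 : p / d ≤ B := (div_le_iff₀ dpos).mpr (by nlinarith)
        linarith [hBle l k hk]
  · intro j hj
    ext x
    simp only [Set.mem_image, Set.mem_Icc]
    constructor
    · rintro ⟨p, ⟨hp1, hp2⟩, rfl⟩
      have h3 : -A ≤ p / d := (le_div_iff₀ dpos).mpr (by nlinarith)
      have h4 : p / d ≤ B := (div_le_iff₀ dpos).mpr (by nlinarith)
      constructor <;> linarith
    · rintro ⟨hx1, hx2⟩
      refine ⟨d * (x - εS j), ⟨by nlinarith, by nlinarith⟩, ?_⟩
      field_simp
      ring
end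

section
/- For each nonempty subset Ω ⊆ {1,…,n}, define the vector g̃_Ω ∈ ℝ^{M} (indexed by pairs: the state-parameters c_j for j ∈ ℤ_d^n \ {0} and measurement-parameters s_{l,k} for l ≠ k ∈ ℤ_d^n) whose c_j-component is 1 if j restricted to the complement of Ω equals 0 and 0 otherwise, and whose s_{l,k}-component is −1 if k restricted to the complement of Ω equals l restricted to the complement of Ω and 0 otherwise. Then the 2^n − 1 vectors {g̃_Ω : ∅ ≠ Ω ⊆ {1,…,n}} are linearly independent. -/
/-- Index set for the SPAM noise parameters: state parameters `c_j` for
`j ∈ ℤ_d^n \ {0}` and measurement parameters `s_{l,k}` for `l ≠ k`. -/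
abbrev SpamIdx (d n : ℕ) :=
  {j : Fin n → Fin d // ∃ i, (j i : ℕ) ≠ 0} ⊕
    {lk : (Fin n → Fin d) × (Fin n → Fin d) // lk.1 ≠ lk.2}

/-- The linearized subsystem depolarizing gauge vector `g̃_Ω`:
`c_j`-component `1[j_{¬Ω} = 0]`, `s_{l,k}`-component `−1[k_{¬Ω} = l_{¬Ω}]`. -/
def gTilde (d n : ℕ) (Ω : Finset (Fin n)) : SpamIdx d n → ℝ
  | Sum.inl j => if ∀ i ∉ Ω, (j.1 i : ℕ) = 0 then 1 else 0
  | Sum.inr lk => if ∀ i ∉ Ω, lk.1.2 i = lk.1.1 i then -1 else 0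

theorem stmt11 (d n : ℕ) (hd : 2 ≤ d) (hn : 1 ≤ n) :
    LinearIndependent ℝ
      (fun Ω : {Ω : Finset (Fin n) // Ω.Nonempty} => gTilde d n Ω.1) := by
  rw [Fintype.linearIndependent_iff]
  intro g hg
  -- the evaluation equation at the indicator vector of Ω
  have key : ∀ Ω : {Ω : Finset (Fin n) // Ω.Nonempty},
      ∑ Ω' : {Ω : Finset (Fin n) // Ω.Nonempty},
        (if Ω.1 ⊆ Ω'.1 then g Ω' else 0) = 0 := by
    intro Ω
    set jΩ : Fin n → Fin d := fun i => if i ∈ Ω.1 then ⟨1, by omega⟩ else ⟨0, by omega⟩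
      with hjΩ
    have hjne : ∃ i, (jΩ i : ℕ) ≠ 0 := by
      obtain ⟨i, hi⟩ := Ω.2
      exact ⟨i, by simp [hjΩ, hi]⟩
    have heval := congrFun hg (Sum.inl ⟨jΩ, hjne⟩)
    rw [Finset.sum_apply] at heval
    have : ∀ Ω' : {Ω : Finset (Fin n) // Ω.Nonempty},
        (g Ω' • gTilde d n Ω'.1) (Sum.inl ⟨jΩ, hjne⟩) =
          (if Ω.1 ⊆ Ω'.1 then g Ω' else 0) := by
      intro Ω'
      have hcond : (∀ i ∉ Ω'.1, (jΩ i : ℕ) = 0) ↔ Ω.1 ⊆ Ω'.1 := by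
        constructor
        · intro h i hi
          by_contra hi'
          have := h i hi'
          simp [hjΩ, hi] at this
        · intro h i hi
          have : i ∉ Ω.1 := fun hmem => hi (h hmem)
          simp [hjΩ, this]
      simp only [Pi.smul_apply, gTilde, smul_eq_mul]
      rw [if_congr hcond rfl rfl]
      split <;> simp
    rw [Finset.sum_congr rfl (fun Ω' _ => this Ω')] at heval
    exact heval
  -- downward induction on n - |Ω|
  have main : ∀ m : ℕ, ∀ Ω : {Ω : Finset (Fin n) // Ω.Nonempty},
      n - Ω.1.card ≤ m → g Ω = 0 := by
    intro m
    induction m using Nat.strong_induction_on with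
    | _ m ih =>
      intro Ω hΩm
      have hsum := key Ω
      rw [← Finset.sum_filter] at hsum
      have hsingle : ∑ Ω' ∈ Finset.univ.filter
          (fun Ω' : {Ω : Finset (Fin n) // Ω.Nonempty} => Ω.1 ⊆ Ω'.1), g Ω' = g Ω := by
        apply Finset.sum_eq_single Ω
        · intro Ω' hΩ' hne
          simp only [Finset.mem_filter, Finset.mem_univ, true_and] at hΩ'
          have hss : Ω.1 ⊂ Ω'.1 := by
            refine ⟨hΩ', fun h => hne (Subtype.ext (le_antisymm h hΩ'))⟩
          have hc1 : Ω.1.card < Ω'.1.card := Finset.card_lt_card hss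
          have hc2 : Ω'.1.card ≤ n := by
            simpa using Finset.card_le_card (Finset.subset_univ Ω'.1)
          have : n - Ω'.1.card < m := by omega
          exact ih _ this Ω' le_rfl
        · intro h
          simp at h
      rw [hsingle] at hsum
      exact hsum
  intro Ω
  exact main (n - Ω.1.card) Ω le_rfl
end

section
/- In the setting of diagonal SPAM on (ℂ^d)^{⊗n} with c_0 = 1 − Σ_{j≠0} c_j and s_{l,l} = 1 − Σ_{k≠l} s_{l,k}, for any permutation tuple π and any t ≠ 0: Tr[E_{π(t)} X_π ρ₀ X_π†] = c_t · s_{π(t),π(t)} + c_0 · s_{π(t),π(0)} + Σ_{j ≠ 0, t} c_j s_{π(t),π(j)}, which equals c_t + s_{π(t),π(0)} up to terms that are products of two small parameters (i.e., the error is bounded by a sum of products of pairs from {c_j : j≠0} ∪ {s_{l,k} : l≠k}). -/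
open Matrix

/-- The permutation unitary `X_π = Σ_j |π(j)⟩⟨j|` on `(ℂ^d)^{⊗n}`, where the
`n`-tuple of permutations `π` acts entrywise on strings `j ∈ ℤ_d^n`. -/
noncomputable def Xperm (d n : ℕ) (π : Fin n → Equiv.Perm (Fin d)) :
    Matrix (Fin n → Fin d) (Fin n → Fin d) ℂ :=
  Matrix.of fun a b => if (∀ i, a i = π i (b i)) then (1 : ℂ) else 0

/-- Entrywise action of an `n`-tuple of permutations on a string in `ℤ_d^n`. -/
def permAct {d n : ℕ} (π : Fin n → Equiv.Perm (Fin d)) (j : Fin n → Fin d) :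
    Fin n → Fin d :=
  fun i => π i (j i)

lemma Xperm_apply (d n : ℕ) (π : Fin n → Equiv.Perm (Fin d)) (a k : Fin n → Fin d) :
    Xperm d n π a k = if k = (fun i => (π i).symm (a i)) then 1 else 0 := by
  simp only [Xperm, of_apply]
  congr 1
  simp only [funext_iff]
  apply propext
  constructor
  · intro h i; rw [Equiv.eq_symm_apply]; exact (h i).symm
  · intro h i; rw [h i]; simp

lemma permAct_injective {d n : ℕ} (π : Fin n → Equiv.Perm (Fin d)) :
    Function.Injective (permAct π) := by
  intro a b h
  funext i
  have := congrFun h i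
  simpa [permAct] using (π i).injective this

lemma sandwich (d n : ℕ) (π : Fin n → Equiv.Perm (Fin d)) (f : (Fin n → Fin d) → ℂ) :
    Xperm d n π * Matrix.diagonal f * (Xperm d n π)ᴴ
      = Matrix.diagonal (fun k => f (fun i => (π i).symm (k i))) := by
  ext a b
  rw [Matrix.mul_apply]
  simp only [Matrix.mul_diagonal, conjTranspose_apply, Xperm_apply, diagonal_apply]
  by_cases hab : a = b
  · subst hab
    simp [Finset.sum_ite_eq', mul_comm]
  · rw [if_neg hab]
    apply Finset.sum_eq_zero
    intro k _
    by_cases h1 : k = fun i => (π i).symm (a i)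
    · have h2 : ¬ (k = fun i => (π i).symm (b i)) := by
        intro h2
        apply hab
        funext i
        have := congrFun h1 i ▸ congrFun h2 i
        have : (π i).symm (a i) = (π i).symm (b i) := by rw [← congrFun h1 i, congrFun h2 i]
        exact (π i).symm.injective this
      simp [h2]
    · simp [h1]


theorem stmt16 (d n : ℕ) [NeZero d] (c : (Fin n → Fin d) → ℝ)
    (s : (Fin n → Fin d) → (Fin n → Fin d) → ℝ)
    (hc0 : c 0 = 1 - ∑ j ∈ ({0}ᶜ : Finset (Fin n → Fin d)), c j)
    (hs : ∀ l, s l l = 1 - ∑ k ∈ ({l}ᶜ : Finset (Fin n → Fin d)), s l k)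
    (π : Fin n → Equiv.Perm (Fin d)) (t : Fin n → Fin d) (ht : t ≠ 0) :
    ((Matrix.diagonal fun k => ((s (permAct π t) k : ℝ) : ℂ)) *
        (Xperm d n π * (Matrix.diagonal fun j => ((c j : ℝ) : ℂ)) * (Xperm d n π)ᴴ)).trace
      = ((c t * s (permAct π t) (permAct π t) + c 0 * s (permAct π t) (permAct π 0)
          + ∑ j ∈ ({0, t}ᶜ : Finset (Fin n → Fin d)), c j * s (permAct π t) (permAct π j)
            : ℝ) : ℂ) ∧
    ∃ err : ℝ,
      ((Matrix.diagonal fun k => ((s (permAct π t) k : ℝ) : ℂ)) *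
          (Xperm d n π * (Matrix.diagonal fun j => ((c j : ℝ) : ℂ)) * (Xperm d n π)ᴴ)).trace
        = ((c t + s (permAct π t) (permAct π 0) + err : ℝ) : ℂ) ∧
      |err| ≤ 3 * (∑ j ∈ ({0}ᶜ : Finset (Fin n → Fin d)), |c j|) *
          (∑ l, ∑ k ∈ ({l}ᶜ : Finset (Fin n → Fin d)), |s l k|) := by
  have hbij : Function.Bijective (permAct π) :=
    Finite.injective_iff_bijective.mp (permAct_injective π)
  -- trace computation
  have htr : ((Matrix.diagonal fun k => ((s (permAct π t) k : ℝ) : ℂ)) *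
        (Xperm d n π * (Matrix.diagonal fun j => ((c j : ℝ) : ℂ)) * (Xperm d n π)ᴴ)).trace
      = ((∑ j, c j * s (permAct π t) (permAct π j) : ℝ) : ℂ) := by
    rw [sandwich, diagonal_mul_diagonal, trace_diagonal]
    push_cast
    exact (Fintype.sum_bijective (permAct π) hbij _ _ (fun j => by
      have : (fun i => (π i).symm (permAct π j i)) = j := by
        funext i; simp [permAct]
      rw [this, mul_comm])).symm
  -- sum split
  have h0t : (0 : Fin n → Fin d) ≠ t := fun h => ht h.symm
  have hsplit : (∑ j, c j * s (permAct π t) (permAct π j))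
      = c t * s (permAct π t) (permAct π t) + c 0 * s (permAct π t) (permAct π 0)
        + ∑ j ∈ ({0, t}ᶜ : Finset (Fin n → Fin d)), c j * s (permAct π t) (permAct π j) := by
    rw [← Finset.sum_add_sum_compl ({0, t} : Finset (Fin n → Fin d)),
      Finset.sum_pair h0t]
    ring
  refine ⟨by rw [htr, hsplit], ?_⟩
  -- error analysis
  set pt := permAct π t with hptdef
  set p0 := permAct π 0 with hp0def
  set St := ∑ k ∈ ({pt}ᶜ : Finset (Fin n → Fin d)), s pt k with hStdef
  set C0 := ∑ j ∈ ({0}ᶜ : Finset (Fin n → Fin d)), c j with hC0def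
  set E := ∑ j ∈ ({0, t}ᶜ : Finset (Fin n → Fin d)), c j * s pt (permAct π j) with hEdef
  refine ⟨E - c t * St - C0 * s pt p0, ?_, ?_⟩
  · rw [htr, hsplit]
    congr 1
    rw [hs pt, hc0]
    ring
  · set C := ∑ j ∈ ({0}ᶜ : Finset (Fin n → Fin d)), |c j| with hCdef
    set S := ∑ l, ∑ k ∈ ({l}ᶜ : Finset (Fin n → Fin d)), |s l k| with hSdef
    have hCnn : 0 ≤ C := Finset.sum_nonneg fun _ _ => abs_nonneg _
    have hSnn : 0 ≤ S := Finset.sum_nonneg fun _ _ =>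
      Finset.sum_nonneg fun _ _ => abs_nonneg _
    have habs_row : (∑ k ∈ ({pt}ᶜ : Finset (Fin n → Fin d)), |s pt k|) ≤ S :=
      Finset.single_le_sum (f := fun l => ∑ k ∈ ({l}ᶜ : Finset (Fin n → Fin d)), |s l k|)
        (fun _ _ => Finset.sum_nonneg fun _ _ => abs_nonneg _) (Finset.mem_univ pt)
    have hct : |c t| ≤ C :=
      Finset.single_le_sum (f := fun j => |c j|) (fun _ _ => abs_nonneg _)
        (by simp [ht])
    have hSt : |St| ≤ S :=
      le_trans (Finset.abs_sum_le_sum_abs _ _) habs_row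
    have hC0 : |C0| ≤ C := Finset.abs_sum_le_sum_abs _ _
    have hp0pt : p0 ≠ pt := fun h => h0t (permAct_injective π h)
    have hsp0 : |s pt p0| ≤ S :=
      le_trans (Finset.single_le_sum (f := fun k => |s pt k|) (fun _ _ => abs_nonneg _)
        (by simpa using hp0pt)) habs_row
    have hE : |E| ≤ C * S := by
      calc |E| ≤ ∑ j ∈ ({0, t}ᶜ : Finset (Fin n → Fin d)), |c j * s pt (permAct π j)| :=
            Finset.abs_sum_le_sum_abs _ _
        _ ≤ ∑ j ∈ ({0, t}ᶜ : Finset (Fin n → Fin d)), |c j| * S := by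
            apply Finset.sum_le_sum
            intro j hj
            rw [abs_mul]
            apply mul_le_mul_of_nonneg_left _ (abs_nonneg _)
            have hjt : j ≠ t := by
              simp only [Finset.mem_compl, Finset.mem_insert, Finset.mem_singleton,
                not_or] at hj
              exact hj.2
            have hπjpt : permAct π j ≠ pt := fun h => hjt (permAct_injective π h)
            exact le_trans (Finset.single_le_sum (f := fun k => |s pt k|)
              (fun _ _ => abs_nonneg _) (by simpa using hπjpt)) habs_row
        _ ≤ C * S := by
            rw [← Finset.sum_mul]
            apply mul_le_mul_of_nonneg_right _ hSnn
            apply Finset.sum_le_sum_of_subset_of_nonneg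
            · intro x hx
              simp only [Finset.mem_compl, Finset.mem_insert, Finset.mem_singleton,
                not_or] at hx ⊢
              exact hx.1
            · intro _ _ _; exact abs_nonneg _
    have h1 : |E - c t * St - C0 * s pt p0| ≤ |E - c t * St| + |C0 * s pt p0| :=
      abs_sub _ _
    have h2 : |E - c t * St| ≤ |E| + |c t * St| := abs_sub _ _
    have h3 : |c t * St| ≤ C * S := by
      rw [abs_mul]; exact mul_le_mul hct hSt (abs_nonneg _) hCnn
    have h4 : |C0 * s pt p0| ≤ C * S := by
      rw [abs_mul]; exact mul_le_mul hC0 hsp0 (abs_nonneg _) hCnn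
    calc |E - c t * St - C0 * s pt p0| ≤ |E| + |c t * St| + |C0 * s pt p0| := by linarith
      _ ≤ 3 * C * S := by linarith
end

section
/- Suppose noisy state preparation has Pauli eigenvalues λ^S_a, noisy measurement has eigenvalues λ^M_a, and a noisy Clifford gate G̃ = G ∘ Λ has Pauli eigenvalues λ_a, where G maps Pauli P_a to ±P_{G(a)} (assume +). Then the sequence 'prepare the +1 eigenstate of P_a through the noisy preparation, apply G̃ a total of 2t+1 times, measure the expectation of P_{G(a)} through the noisy measurement' yields F_a(t) = λ^S_a · λ^M_{G(a)} · λ_a · (λ_a λ_{G(a)})^t, provided G(G(a)) = a. -/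
open Matrix

/-- Index of an `n`-qubit Pauli operator: an `X`-part and a `Z`-part. -/
abbrev PIdx (n : ℕ) := (Fin n → ZMod 2) × (Fin n → ZMod 2)

/-- The (Hermitian) `n`-qubit Pauli operator `P_{(x,z)} = i^{x·z} X^x Z^z`
(tensor product of `I, X, Y, Z`), as a matrix in the computational basis. -/
noncomputable def PauliOp (n : ℕ) (a : PIdx n) :
    Matrix (Fin n → ZMod 2) (Fin n → ZMod 2) ℂ :=
  Matrix.of fun r c =>
    if r = fun i => c i + a.1 i then
      Complex.I ^ (∑ i, (a.1 i).val * (a.2 i).val) *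
        ∏ i, (-1 : ℂ) ^ ((a.2 i).val * (c i).val)
    else 0

/-- The map acting diagonally in the Pauli basis with eigenvalues `lam`:
`Λ(P_b) = lam b • P_b` (e.g. a Pauli channel, noisy SP or noisy M). -/
noncomputable def diagMap (n : ℕ) (lam : PIdx n → ℂ)
    (ρ : Matrix (Fin n → ZMod 2) (Fin n → ZMod 2) ℂ) :
    Matrix (Fin n → ZMod 2) (Fin n → ZMod 2) ℂ :=
  ∑ b, (lam b * ((2 : ℂ) ^ n)⁻¹ * (PauliOp n b * ρ).trace) • PauliOp n b

/-- The ideal Clifford channel `G`, relabeling Pauli operators: `G(P_b) = P_{g b}`. -/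
noncomputable def cliffMap (n : ℕ) (g : PIdx n ≃ PIdx n)
    (ρ : Matrix (Fin n → ZMod 2) (Fin n → ZMod 2) ℂ) :
    Matrix (Fin n → ZMod 2) (Fin n → ZMod 2) ℂ :=
  ∑ b, (((2 : ℂ) ^ n)⁻¹ * (PauliOp n b * ρ).trace) • PauliOp n (g b)

lemma zmod2_sum (f : ZMod 2 → ℂ) : ∑ x, f x = f 0 + f 1 := by
  have h : (Finset.univ : Finset (ZMod 2)) = {0, 1} := by decide
  rw [h, Finset.sum_insert (by decide), Finset.sum_singleton]

lemma site (u v w : ZMod 2) :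
    ∑ x : ZMod 2, ((-1:ℂ))^(u.val * (x+w).val + v.val * x.val)
      = if u = v then 2 * (-1:ℂ)^(u.val * w.val) else 0 := by
  rw [zmod2_sum]
  have hu : u = 0 ∨ u = 1 := by revert u; decide
  have hv : v = 0 ∨ v = 1 := by revert v; decide
  have hw : w = 0 ∨ w = 1 := by revert w; decide
  rcases hu with rfl | rfl <;> rcases hv with rfl | rfl <;> rcases hw with rfl | rfl <;>
    norm_num [show ((1:ZMod 2) + 1).val = 0 from rfl, show ((0:ZMod 2) + 1).val = 1 from rfl,
      show ((1:ZMod 2) + 0).val = 1 from rfl, show ((0:ZMod 2) + 0).val = 0 from rfl,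
      show (0:ZMod 2).val = 0 from rfl, show (1:ZMod 2).val = 1 from rfl,
      show (2:ZMod 2).val = 0 by decide]

lemma z2 : ∀ x y : ZMod 2, x + y + y = x := by decide

lemma z2' : ∀ x u v : ZMod 2, x = x + u + v → v = u := by decide

lemma pauli_mul_trace (n : ℕ) (a b : PIdx n) :
    (PauliOp n a * PauliOp n b).trace = if a = b then (2:ℂ)^n else 0 := by
  classical
  rcases a with ⟨a1, a2⟩
  rcases b with ⟨b1, b2⟩
  rw [Matrix.trace]
  simp only [Matrix.diag_apply, Matrix.mul_apply]
  have hinner : ∀ c : Fin n → ZMod 2,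
      (∑ r, PauliOp n (a1, a2) c r * PauliOp n (b1, b2) r c)
      = PauliOp n (a1, a2) c (fun i => c i + b1 i) *
          PauliOp n (b1, b2) (fun i => c i + b1 i) c := by
    intro c
    apply Finset.sum_eq_single_of_mem _ (Finset.mem_univ _)
    intro r _ hr
    have h0 : PauliOp n (b1, b2) r c = 0 := by
      rw [PauliOp]
      simp only [Matrix.of_apply]
      exact if_neg hr
    rw [h0, mul_zero]
  simp only [hinner]
  by_cases h1 : a1 = b1
  · subst h1
    have hterm : ∀ c : Fin n → ZMod 2,
        PauliOp n (a1, a2) c (fun i => c i + a1 i) *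
          PauliOp n (a1, b2) (fun i => c i + a1 i) c
        = (Complex.I ^ (∑ i, (a1 i).val * (a2 i).val) *
            Complex.I ^ (∑ i, (a1 i).val * (b2 i).val)) *
          ∏ i, (-1:ℂ) ^ ((a2 i).val * ((c i + a1 i)).val + (b2 i).val * (c i).val) := by
      intro c
      rw [PauliOp, PauliOp]
      simp only [Matrix.of_apply]
      rw [if_pos (by funext i; exact (z2 (c i) (a1 i)).symm)]
      simp only [if_true, eq_self_iff_true]
      rw [mul_mul_mul_comm, ← Finset.prod_mul_distrib]
      simp only [← pow_add]
    simp only [hterm]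
    rw [← Finset.mul_sum]
    have hsplit : (∑ c : Fin n → ZMod 2,
        ∏ i, (-1:ℂ) ^ ((a2 i).val * ((c i + a1 i)).val + (b2 i).val * (c i).val))
        = ∏ i, ∑ x : ZMod 2, (-1:ℂ) ^ ((a2 i).val * ((x + a1 i)).val + (b2 i).val * x.val) :=
      (Fintype.prod_sum fun i x => (-1:ℂ) ^ ((a2 i).val * ((x + a1 i)).val + (b2 i).val * x.val)).symm
    rw [hsplit]
    simp only [site]
    by_cases h2 : a2 = b2
    · subst h2
      simp only [if_true, eq_self_iff_true]
      rw [Finset.prod_mul_distrib, Finset.prod_const, Finset.card_univ, Fintype.card_fin,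
        Finset.prod_pow_eq_pow_sum]
      have hc : (∑ i, (a2 i).val * (a1 i).val) = ∑ i, (a1 i).val * (a2 i).val :=
        Finset.sum_congr rfl fun i _ => Nat.mul_comm _ _
      rw [hc]
      set s := ∑ i, (a1 i).val * (a2 i).val with hs
      rw [show Complex.I ^ s * Complex.I ^ s * ((2:ℂ)^n * (-1:ℂ)^s)
          = (Complex.I * Complex.I * -1)^s * (2:ℂ)^n by rw [mul_pow, mul_pow]; ring]
      rw [Complex.I_mul_I]
      norm_num
    · obtain ⟨i, hi⟩ := Function.ne_iff.mp h2
      rw [Finset.prod_eq_zero (Finset.mem_univ i)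
        (show (if a2 i = b2 i then (2:ℂ) * (-1:ℂ) ^ ((a2 i).val * (a1 i).val) else 0) = 0
          from if_neg hi), mul_zero, if_neg (by simp [h2])]
  · have hzero : ∀ c : Fin n → ZMod 2,
        PauliOp n (a1, a2) c (fun i => c i + b1 i) = 0 := by
      intro c
      rw [PauliOp]
      simp only [Matrix.of_apply]
      apply if_neg
      intro h
      apply h1
      funext i
      exact z2' (c i) (b1 i) (a1 i) (congrFun h i)
    simp only [hzero, zero_mul, Finset.sum_const_zero]
    rw [if_neg (by simp [h1])]

lemma two_pow_ne (n : ℕ) : ((2:ℂ)^n) ≠ 0 := pow_ne_zero _ two_ne_zero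

lemma pauli_zero (n : ℕ) : PauliOp n 0 = 1 := by
  ext r c
  simp [PauliOp, Matrix.one_apply, funext_iff, eq_comm]

lemma diag_pauli (n : ℕ) (lam : PIdx n → ℂ) (c : PIdx n) :
    diagMap n lam (PauliOp n c) = lam c • PauliOp n c := by
  rw [diagMap]
  rw [Finset.sum_eq_single_of_mem c (Finset.mem_univ _)
    (fun b _ hb => by rw [pauli_mul_trace, if_neg hb, mul_zero, zero_smul])]
  rw [pauli_mul_trace, if_pos rfl, mul_assoc, inv_mul_cancel₀ (two_pow_ne n), mul_one]

lemma cliff_pauli (n : ℕ) (g : PIdx n ≃ PIdx n) (c : PIdx n) :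
    cliffMap n g (PauliOp n c) = PauliOp n (g c) := by
  rw [cliffMap]
  rw [Finset.sum_eq_single_of_mem c (Finset.mem_univ _)
    (fun b _ hb => by rw [pauli_mul_trace, if_neg hb, mul_zero, zero_smul])]
  rw [pauli_mul_trace, if_pos rfl, inv_mul_cancel₀ (two_pow_ne n), one_smul]

lemma diag_lin (n : ℕ) (lam : PIdx n → ℂ) (x y : ℂ)
    (ρ σ : Matrix (Fin n → ZMod 2) (Fin n → ZMod 2) ℂ) :
    diagMap n lam (x • ρ + y • σ) = x • diagMap n lam ρ + y • diagMap n lam σ := by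
  simp only [diagMap, Matrix.mul_add, Matrix.mul_smul, Matrix.trace_add, Matrix.trace_smul,
    smul_eq_mul, Finset.smul_sum, ← Finset.sum_add_distrib, smul_smul]
  refine Finset.sum_congr rfl fun b _ => ?_
  rw [← add_smul]
  ring_nf

lemma cliff_lin (n : ℕ) (g : PIdx n ≃ PIdx n) (x y : ℂ)
    (ρ σ : Matrix (Fin n → ZMod 2) (Fin n → ZMod 2) ℂ) :
    cliffMap n g (x • ρ + y • σ) = x • cliffMap n g ρ + y • cliffMap n g σ := by
  simp only [cliffMap, Matrix.mul_add, Matrix.mul_smul, Matrix.trace_add, Matrix.trace_smul,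
    smul_eq_mul, Finset.smul_sum, ← Finset.sum_add_distrib, smul_smul]
  refine Finset.sum_congr rfl fun b _ => ?_
  rw [← add_smul]
  ring_nf

lemma M_combo (n : ℕ) (g : PIdx n ≃ PIdx n) (lam : PIdx n → ℂ) (x y : ℂ) (b c : PIdx n) :
    (cliffMap n g ∘ diagMap n lam) (x • PauliOp n b + y • PauliOp n c)
      = (x * lam b) • PauliOp n (g b) + (y * lam c) • PauliOp n (g c) := by
  simp only [Function.comp_apply, diag_lin, diag_pauli, smul_smul]
  rw [cliff_lin n g (x * lam b) (y * lam c) (PauliOp n b) (PauliOp n c), cliff_pauli, cliff_pauli]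

lemma iter_odd (n : ℕ) (g : PIdx n ≃ PIdx n) (lam : PIdx n → ℂ) (hg0 : g 0 = 0)
    (a : PIdx n) (hgg : g (g a) = a) (x y : ℂ) (t : ℕ) :
    (cliffMap n g ∘ diagMap n lam)^[2 * t + 1] (x • PauliOp n 0 + y • PauliOp n a)
      = (x * lam 0 ^ (2 * t + 1)) • PauliOp n 0
        + (y * lam a * (lam a * lam (g a)) ^ t) • PauliOp n (g a) := by
  induction t with
  | zero =>
    rw [show 2 * 0 + 1 = 1 by ring, Function.iterate_one, M_combo, hg0]
    ring_nf
  | succ t ih =>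
    rw [show 2 * (t + 1) + 1 = (2 * t + 1) + 1 + 1 by ring,
      Function.iterate_succ_apply', Function.iterate_succ_apply', ih, M_combo,
      hg0, hgg, M_combo, hg0]
    rw [show x * lam 0 ^ (2 * t + 1) * lam 0 * lam 0 = x * lam 0 ^ (2 * (t+1) + 1) by ring,
      show y * lam a * (lam a * lam (g a)) ^ t * lam (g a) * lam a
        = y * lam a * (lam a * lam (g a)) ^ (t+1) by ring,
      show 2 * (t + 1) + 1 = 2 * t + 1 + 1 + 1 by ring]

/-- Intercept cycle benchmarking: preparing the +1 eigenstate of `P_a` through the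
noisy preparation `Λ^S`, applying the noisy gate `G̃ = G ∘ Λ` a total of `2t+1` times,
and measuring the expectation of `P_{G(a)}` through the noisy measurement `Λ^M`, yields
`F_a(t) = λ^S_a λ^M_{G(a)} λ_a (λ_a λ_{G(a)})^t`, provided `G(G(a)) = a`. -/
theorem stmt19 (n : ℕ) (a : PIdx n) (ha : a ≠ 0) (g : PIdx n ≃ PIdx n)
    (hg0 : g 0 = 0) (hgg : g (g a) = a) (lam lamS lamM : PIdx n → ℂ) (t : ℕ) :
    (diagMap n lamM (PauliOp n (g a)) *
        (cliffMap n g ∘ diagMap n lam)^[2 * t + 1]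
          (diagMap n lamS (((2 : ℂ) ^ n)⁻¹ • (1 + PauliOp n a)))).trace
      = lamS a * lamM (g a) * lam a * (lam a * lam (g a)) ^ t := by
  have hga : g a ≠ 0 := fun h => ha (g.injective (h.trans hg0.symm))
  have hstate : diagMap n lamS (((2 : ℂ) ^ n)⁻¹ • (1 + PauliOp n a))
      = (((2:ℂ)^n)⁻¹ * lamS 0) • PauliOp n 0 + (((2:ℂ)^n)⁻¹ * lamS a) • PauliOp n a := by
    rw [show ((2:ℂ)^n)⁻¹ • (1 + PauliOp n a)
        = ((2:ℂ)^n)⁻¹ • PauliOp n 0 + ((2:ℂ)^n)⁻¹ • PauliOp n a by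
      rw [pauli_zero, smul_add], diag_lin, diag_pauli, diag_pauli, smul_smul, smul_smul]
  rw [hstate, iter_odd n g lam hg0 a hgg, diag_pauli]
  rw [Matrix.smul_mul, Matrix.mul_add, Matrix.mul_smul, Matrix.mul_smul,
    Matrix.trace_smul, Matrix.trace_add, Matrix.trace_smul, Matrix.trace_smul,
    pauli_mul_trace, pauli_mul_trace, if_neg hga, if_pos rfl]
  simp only [smul_eq_mul, mul_zero, zero_add]
  field_simp [two_pow_ne n]
end
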